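/- Let $u, v \in \mathbb{R}^7$ be orthonormal, let $w$ be a unit vector orthogonal to $u$, $v$, and $u \times v$, and set $\tilde{S} = \sigma(u, v, u \times v, w)$. Then $\star\varphi_0(\tilde{S}, u \times \tilde{S}, v \times \tilde{S}, (u \times v) \times \tilde{S}) = \pm 1$; in particular the 4-plane spanned by these four vectors is coassociative (calibrated by $\pm\star\varphi_0$). -/

import Mathlib

noncomputable section
open scoped RealInnerProductSpace

abbrev R7 : Type := EuclideanSpace ℝ (Fin 7)

/-- standard basis vector -/
def e (k : Fin 7) : R7 := EuclideanSpace.single k 1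

/-- `e^{ijk}(u,v,w)` -/
def tri (i j k : Fin 7) (u v w : R7) : ℝ :=
  Matrix.det !![u i, u j, u k; v i, v j, v k; w i, w j, w k]

/-- the standard `G₂` 3-form `φ₀` (indices shifted to 0-based) -/
def phi0 (u v w : R7) : ℝ :=
  tri 0 1 2 u v w + tri 0 3 4 u v w + tri 0 5 6 u v w + tri 1 3 5 u v w
    - tri 1 4 6 u v w - tri 2 3 6 u v w - tri 2 4 5 u v w

/-- `e^{ijkl}(u,v,w,z)` -/
def quad (i j k l : Fin 7) (u v w z : R7) : ℝ :=
  Matrix.det !![u i, u j, u k, u l; v i, v j, v k, v l;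
    w i, w j, w k, w l; z i, z j, z k, z l]

/-- the 4-form `⋆φ₀` -/
def starphi0 (u v w z : R7) : ℝ :=
  quad 3 4 5 6 u v w z + quad 1 2 5 6 u v w z + quad 1 2 3 4 u v w z
    + quad 0 2 4 6 u v w z - quad 0 2 3 5 u v w z - quad 0 1 4 5 u v w z
    - quad 0 1 3 6 u v w z

/-- the cross product: `⟪u × v, w⟫ = φ₀(u,v,w)` -/
def cross (u v : R7) : R7 :=
  (WithLp.equiv 2 (Fin 7 → ℝ)).symm fun k => phi0 u v (e k)

/-- the associator `χ`: `⟪χ(u,v,w), z⟫ = ⋆φ₀(u,v,w,z)` -/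
def chi (u v w : R7) : R7 :=
  (WithLp.equiv 2 (Fin 7 → ℝ)).symm fun k => starphi0 u v w (e k)

/-- the coassociator `σ` -/
def sigma (a b c d : R7) : R7 :=
  ⟪b, cross c d⟫ • a + ⟪c, cross a d⟫ • b + ⟪a, cross b d⟫ • c + ⟪b, cross a c⟫ • d

/-- Gram determinant `|u ∧ v ∧ w|²` -/
def gram3 (u v w : R7) : ℝ :=
  Matrix.det !![⟪u,u⟫, ⟪u,v⟫, ⟪u,w⟫; ⟪v,u⟫, ⟪v,v⟫, ⟪v,w⟫; ⟪w,u⟫, ⟪w,v⟫, ⟪w,w⟫]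

/-- Gram determinant `|u ∧ v ∧ w ∧ z|²` -/
def gram4 (u v w z : R7) : ℝ :=
  Matrix.det !![⟪u,u⟫, ⟪u,v⟫, ⟪u,w⟫, ⟪u,z⟫;
    ⟪v,u⟫, ⟪v,v⟫, ⟪v,w⟫, ⟪v,z⟫;
    ⟪w,u⟫, ⟪w,v⟫, ⟪w,w⟫, ⟪w,z⟫;
    ⟪z,u⟫, ⟪z,v⟫, ⟪z,w⟫, ⟪z,z⟫]

/-! Orthogonality of `w` to the associative 3-plane spanned by `u`, `v`, `u × v` kills three of the
four coefficients of `σ(u, v, u × v, w)`, leaving `(⟪u, v⟫² - |u|²|v|²) w = -w`. Up to this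
scalar, the four vectors are `w, u × w, v × w, (u × v) × w`, and `⋆φ₀` on them is evaluated with
the identity `⋆φ₀(x, y, z, d) = ⟪x, z⟫⟪y, d⟫ - ⟪x, y⟫⟪z, d⟫ - ⟪x × (y × z), d⟫` (whose case
`x = y` gives `a × (a × b) = ⟪a, b⟫ a - |a|² b`) and the alternation of `φ₀` and `⋆φ₀`. -/

theorem Matrix.det_fin_four {R : Type*} [CommRing R] (A : Matrix (Fin 4) (Fin 4) R) :
    A.det =
      A 0 0 * (A 1 1 * A 2 2 * A 3 3 - A 1 1 * A 2 3 * A 3 2 - A 1 2 * A 2 1 * A 3 3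
          + A 1 2 * A 2 3 * A 3 1 + A 1 3 * A 2 1 * A 3 2 - A 1 3 * A 2 2 * A 3 1)
      - A 0 1 * (A 1 0 * A 2 2 * A 3 3 - A 1 0 * A 2 3 * A 3 2 - A 1 2 * A 2 0 * A 3 3
          + A 1 2 * A 2 3 * A 3 0 + A 1 3 * A 2 0 * A 3 2 - A 1 3 * A 2 2 * A 3 0)
      + A 0 2 * (A 1 0 * A 2 1 * A 3 3 - A 1 0 * A 2 3 * A 3 1 - A 1 1 * A 2 0 * A 3 3
          + A 1 1 * A 2 3 * A 3 0 + A 1 3 * A 2 0 * A 3 1 - A 1 3 * A 2 1 * A 3 0)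
      - A 0 3 * (A 1 0 * A 2 1 * A 3 2 - A 1 0 * A 2 2 * A 3 1 - A 1 1 * A 2 0 * A 3 2
          + A 1 1 * A 2 2 * A 3 0 + A 1 2 * A 2 0 * A 3 1 - A 1 2 * A 2 1 * A 3 0) := by
  simp only [Matrix.det_succ_row_zero, Fin.sum_univ_succ, Fin.succ, Fin.succAbove, Fin.castSucc,
    Fin.castAdd_mk, Fin.coe_ofNat_eq_mod, Fin.mk_one, Fin.reduceFinMk, Fin.reduceCastAdd, Fin.reduceLT,
    Fin.lt_one_iff, Fin.reduceEq, Fin.val_eq_zero, Fin.default_eq_zero, Nat.zero_mod, Nat.one_mod,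
    Nat.mod_succ, Nat.succ_eq_add_one, Nat.reduceAdd, Matrix.submatrix_apply,
    Matrix.submatrix_submatrix, Function.comp_apply, Matrix.det_unique, Finset.univ_unique,
    Finset.sum_singleton, Finset.sum_neg_distrib, Finset.sum_const, Finset.card_singleton, one_smul,
    lt_self_iff_false, not_lt_zero, zero_lt_one, ↓reduceIte, pow_zero, pow_one, even_two,
    Even.neg_pow, one_pow, one_mul, neg_mul, zero_add]
  ring

lemma inner_eq_coords (a b : R7) :
    ⟪a, b⟫ = a 0 * b 0 + a 1 * b 1 + a 2 * b 2 + a 3 * b 3 + a 4 * b 4 + a 5 * b 5 + a 6 * b 6 := by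
  simp only [PiLp.inner_apply, RCLike.inner_apply, conj_trivial, Fin.sum_univ_seven]
  ring

lemma cross_eq (a b : R7) : cross a b = WithLp.toLp 2 ![
    a 1 * b 2 - a 2 * b 1 + a 3 * b 4 - a 4 * b 3 + a 5 * b 6 - a 6 * b 5,
    a 2 * b 0 - a 0 * b 2 + a 3 * b 5 - a 5 * b 3 + a 6 * b 4 - a 4 * b 6,
    a 0 * b 1 - a 1 * b 0 + a 5 * b 4 - a 4 * b 5 + a 6 * b 3 - a 3 * b 6,
    a 4 * b 0 - a 0 * b 4 + a 5 * b 1 - a 1 * b 5 + a 2 * b 6 - a 6 * b 2,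
    a 0 * b 3 - a 3 * b 0 + a 1 * b 6 - a 6 * b 1 + a 2 * b 5 - a 5 * b 2,
    a 6 * b 0 - a 0 * b 6 + a 1 * b 3 - a 3 * b 1 + a 4 * b 2 - a 2 * b 4,
    a 0 * b 5 - a 5 * b 0 + a 4 * b 1 - a 1 * b 4 + a 3 * b 2 - a 2 * b 3] := by
  ext k
  fin_cases k <;>
  · simp only [cross, phi0, tri, e, PiLp.single_apply, WithLp.equiv_symm_apply,
      Matrix.det_fin_three, Matrix.of_apply, Matrix.cons_val', Matrix.cons_val_zero,
      Matrix.cons_val_fin_one, Matrix.cons_val_one, Matrix.cons_val, Fin.zero_eta, Fin.mk_one,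
      Fin.reduceFinMk, Fin.reduceEq, ↓reduceIte, mul_ite, mul_one, mul_zero]
    ring

lemma inner_cross (a b c : R7) : ⟪cross a b, c⟫ = phi0 a b c := by
  simp only [inner_eq_coords, cross_eq, phi0, tri, Matrix.det_fin_three, Matrix.of_apply, Matrix.cons_val', Matrix.cons_val_zero,
    Matrix.cons_val_fin_one, Matrix.cons_val_one, Matrix.cons_val]
  ring

lemma phi0_swap_right (a b c : R7) : phi0 a b c = -phi0 a c b := by
  simp only [phi0, tri, Matrix.det_fin_three, Matrix.of_apply, Matrix.cons_val', Matrix.cons_val_zero,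
    Matrix.cons_val_fin_one, Matrix.cons_val_one, Matrix.cons_val]
  ring

lemma phi0_cycle (a b c : R7) : phi0 a b c = phi0 b c a := by
  simp only [phi0, tri, Matrix.det_fin_three, Matrix.of_apply, Matrix.cons_val', Matrix.cons_val_zero,
    Matrix.cons_val_fin_one, Matrix.cons_val_one, Matrix.cons_val]
  ring

lemma starphi0_eq (x y z d : R7) :
    starphi0 x y z d = ⟪x, z⟫ * ⟪y, d⟫ - ⟪x, y⟫ * ⟪z, d⟫ - ⟪cross x (cross y z), d⟫ := by
  simp only [starphi0, quad, Matrix.det_fin_four, inner_eq_coords, cross_eq, Matrix.of_apply, Matrix.cons_val', Matrix.cons_val_zero,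
    Matrix.cons_val_fin_one, Matrix.cons_val_one, Matrix.cons_val]
  ring

lemma starphi0_cycle (a b c d : R7) : starphi0 a b c d = -starphi0 d a b c := by
  simp only [starphi0, quad, Matrix.det_fin_four, Matrix.of_apply, Matrix.cons_val', Matrix.cons_val_zero,
    Matrix.cons_val_fin_one, Matrix.cons_val_one, Matrix.cons_val]
  ring

lemma starphi0_self_left (a c d : R7) : starphi0 a a c d = 0 := by
  have hquad (i j k l : Fin 7) : quad i j k l a a c d = 0 :=
    Matrix.det_zero_of_row_eq (i := 0) (j := 1) (by decide) rfl
  simp [starphi0, hquad]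

lemma starphi0_smul (t : ℝ) (a b c d : R7) :
    starphi0 (t • a) (t • b) (t • c) (t • d) = t ^ 4 * starphi0 a b c d := by
  have hquad (i j k l : Fin 7) :
      quad i j k l (t • a) (t • b) (t • c) (t • d) = t ^ 4 * quad i j k l a b c d := by
    rw [quad, quad, show t ^ 4 = t ^ Fintype.card (Fin 4) from rfl, ← Matrix.det_smul]
    congr 1
    ext r s
    fin_cases r <;> fin_cases s <;> rfl
  simp only [starphi0, hquad]
  ring

lemma inner_cross_swap (a b c : R7) : ⟪cross a b, c⟫ = -⟪cross a c, b⟫ := by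
  rw [inner_cross, inner_cross, phi0_swap_right]

lemma inner_cross_cycle (a b c : R7) : ⟪cross a b, c⟫ = ⟪cross b c, a⟫ := by
  rw [inner_cross, inner_cross, phi0_cycle]

lemma inner_cross_self_right (a b : R7) : ⟪cross a b, b⟫ = 0 := by
  have := inner_cross_swap a b b
  linarith

lemma inner_cross_self_left (a b : R7) : ⟪cross a b, a⟫ = 0 := by
  rw [inner_cross_cycle, inner_cross_self_right]

lemma inner_cross_right (a b c : R7) : ⟪a, cross b c⟫ = ⟪cross a b, c⟫ := by
  rw [real_inner_comm, inner_cross_cycle, inner_cross_cycle]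

lemma cross_swap (a b : R7) : cross a b = -cross b a := by
  refine ext_inner_right ℝ fun c => ?_
  rw [inner_neg_left, inner_cross_cycle, inner_cross_swap, inner_cross_cycle]

lemma cross_smul_right (t : ℝ) (a b : R7) : cross a (t • b) = t • cross a b := by
  ext k
  fin_cases k <;>
  · simp only [cross_eq, PiLp.smul_apply, smul_eq_mul, Fin.zero_eta, Fin.mk_one, Fin.reduceFinMk,
      Matrix.cons_val_zero, Matrix.cons_val_one, Matrix.cons_val]
    ring

lemma cross_cross_self (a b : R7) : cross a (cross a b) = ⟪a, b⟫ • a - ⟪a, a⟫ • b := by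
  refine ext_inner_right ℝ fun d => ?_
  have := starphi0_eq a a b d
  rw [starphi0_self_left] at this
  rw [inner_sub_left, inner_smul_left, inner_smul_left]
  simp only [conj_trivial]
  linarith

lemma cross_cross_self_left (a b : R7) : cross (cross a b) a = ⟪a, a⟫ • b - ⟪a, b⟫ • a := by
  rw [cross_swap, cross_cross_self, neg_sub]

lemma cross_cross_self_right (a b : R7) : cross (cross a b) b = ⟪a, b⟫ • b - ⟪b, b⟫ • a := by
  rw [cross_swap, cross_swap a, ← neg_one_smul ℝ (cross b a), cross_smul_right, cross_cross_self,
    real_inner_comm]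
  module

section Frame

variable {u v w : R7}

lemma sigma_cross_eq_smul (hwu : ⟪w, u⟫ = 0) (hwv : ⟪w, v⟫ = 0) (hwc : ⟪w, cross u v⟫ = 0) :
    sigma u v (cross u v) w = (⟪u, v⟫ ^ 2 - ⟪u, u⟫ * ⟪v, v⟫) • w := by
  rw [real_inner_comm] at hwu hwv hwc
  have coeff_u : ⟪v, cross (cross u v) w⟫ = 0 := by
    rw [inner_cross_right, cross_swap v, inner_neg_left, cross_cross_self_right, inner_sub_left,
      inner_smul_left, inner_smul_left, hwu, hwv]
    simp
  have coeff_v : ⟪cross u v, cross u w⟫ = 0 := by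
    rw [inner_cross_right, cross_cross_self_left, inner_sub_left, inner_smul_left,
      inner_smul_left, hwu, hwv]
    simp
  have coeff_c : ⟪u, cross v w⟫ = 0 := by rw [inner_cross_right, hwc]
  have coeff_w : ⟪v, cross u (cross u v)⟫ = ⟪u, v⟫ ^ 2 - ⟪u, u⟫ * ⟪v, v⟫ := by
    rw [cross_cross_self, inner_sub_right, inner_smul_right, inner_smul_right, real_inner_comm v u]
    ring
  simp only [sigma, coeff_u, coeff_v, coeff_c, coeff_w, zero_smul, zero_add]

lemma starphi0_cross_frame (hwu : ⟪w, u⟫ = 0) (hwv : ⟪w, v⟫ = 0) (hwc : ⟪w, cross u v⟫ = 0) :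
    starphi0 w (cross u w) (cross v w) (cross (cross u v) w) =
      (⟪u, v⟫ ^ 2 - ⟪u, u⟫ * ⟪v, v⟫) * ⟪w, w⟫ ^ 2 := by
  set c := cross u v
  rw [real_inner_comm] at hwu hwv hwc
  have hcu : ⟪c, u⟫ = 0 := inner_cross_self_left u v
  -- cycling `v × w` to the front leaves the plain vector `w` in the slot paired by `starphi0_eq`
  have h_starphi0 : starphi0 (cross v w) c u w = (⟪u, v⟫ ^ 2 - ⟪u, u⟫ * ⟪v, v⟫) * ⟪w, w⟫ := by
    rw [starphi0_eq, hwc, hwu, inner_cross_swap (cross v w), cross_cross_self_right,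
      cross_cross_self_left]
    simp only [inner_sub_left, inner_sub_right, inner_smul_left, inner_smul_right, hwv,
      real_inner_comm u v, conj_trivial]
    ring
  have h_inner : ⟪c, cross (cross u w) (cross v w)⟫ = starphi0 (cross v w) c u w := by
    have := starphi0_eq c u w (cross v w)
    rw [starphi0_cycle, hwc, hcu] at this
    rw [inner_cross_right]
    linarith
  have h_cross : cross w (cross c w) = ⟪w, w⟫ • c := by
    rw [cross_swap w, cross_cross_self_right, hwc]
    simp
  rw [starphi0_eq, inner_cross_right w v, inner_cross_self_left, inner_cross_right w u,
    inner_cross_self_left, inner_cross_swap w, h_cross, inner_smul_left, h_inner, h_starphi0]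
  simp only [conj_trivial]
  ring

theorem starphi0_sigma_cross (hwu : ⟪w, u⟫ = 0) (hwv : ⟪w, v⟫ = 0) (hwc : ⟪w, cross u v⟫ = 0) :
    starphi0 (sigma u v (cross u v) w) (cross u (sigma u v (cross u v) w))
        (cross v (sigma u v (cross u v) w)) (cross (cross u v) (sigma u v (cross u v) w)) =
      (⟪u, v⟫ ^ 2 - ⟪u, u⟫ * ⟪v, v⟫) ^ 5 * ⟪w, w⟫ ^ 2 := by
  rw [sigma_cross_eq_smul hwu hwv hwc, cross_smul_right, cross_smul_right, cross_smul_right,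
    starphi0_smul, starphi0_cross_frame hwu hwv hwc]
  ring

end Frame

theorem stmt18 (u v w : R7) (hu : ‖u‖ = 1) (hv : ‖v‖ = 1) (hw : ‖w‖ = 1)
    (huv : ⟪u, v⟫ = 0) (hwu : ⟪w, u⟫ = 0) (hwv : ⟪w, v⟫ = 0)
    (hwc : ⟪w, cross u v⟫ = 0) :
    starphi0 (sigma u v (cross u v) w) (cross u (sigma u v (cross u v) w))
        (cross v (sigma u v (cross u v) w))
        (cross (cross u v) (sigma u v (cross u v) w)) = 1 ∨
      starphi0 (sigma u v (cross u v) w) (cross u (sigma u v (cross u v) w))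
        (cross v (sigma u v (cross u v) w))
        (cross (cross u v) (sigma u v (cross u v) w)) = -1 := by
  right
  rw [starphi0_sigma_cross hwu hwv hwc, huv, real_inner_self_eq_norm_sq,
    real_inner_self_eq_norm_sq, real_inner_self_eq_norm_sq, hu, hv, hw]
  norm_num
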